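/- Let r > 0 and k ∈ (0, 1/√2), and let D : C_r → ℝ^d satisfy |D(φ) − D(ψ)| ≤ k‖φ − ψ‖_r for all φ, ψ ∈ C_r and D(0) = 0. Let t ≥ 0 and let x : ℝ → ℝ^d be continuous on [0,t] with initial segment ξ := x_0 satisfying ‖ξ‖_r < ∞. Then (1 − 2k²) · sup_{0 ≤ s ≤ t}|x(s)|² ≤ 2k²‖ξ‖²_r + 2 · sup_{0 ≤ s ≤ t}|x(s) − D(x_s)|². -/

import Mathlib

/-- The segment `x_t(θ) = x(t + θ)`. -/
def seg {d : ℕ} (x : ℝ → EuclideanSpace ℝ (Fin d)) (t : ℝ) :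
    ℝ → EuclideanSpace ℝ (Fin d) := fun θ => x (t + θ)

/-- The weighted norm `‖φ‖_r = sup_{θ ≤ 0} e^{rθ} |φ(θ)|` (as a real supremum). -/
noncomputable def rnorm {d : ℕ} (r : ℝ) (φ : ℝ → EuclideanSpace ℝ (Fin d)) : ℝ :=
  sSup ((fun θ => Real.exp (r * θ) * ‖φ θ‖) '' Set.Iic 0)

/-- Membership in `C_r`: continuity on `(−∞,0]` and finiteness of `‖·‖_r`. -/
def memCr {d : ℕ} (r : ℝ) (φ : ℝ → EuclideanSpace ℝ (Fin d)) : Prop :=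
  ContinuousOn φ (Set.Iic 0) ∧
    BddAbove ((fun θ => Real.exp (r * θ) * ‖φ θ‖) '' Set.Iic 0)

/-!
Let `S = |x(s₀)|` be the maximum of `|x|` on `[0,t]` and `N = ‖ξ‖_r`. Since `r ≥ 0`, each weighted
term `e^{rθ}|x(s+θ)|` of a segment `x_s` with `s ∈ [0,t]` is bounded by `N` when `s + θ ≤ 0` and
by `S` otherwise, so `‖x_s‖_r ≤ max N S`. At `s₀`, splitting
`x(s₀) = D(x_{s₀}) + (x(s₀) − D(x_{s₀}))` and using `|D(x_{s₀})| ≤ k m` with `m = ‖x_{s₀}‖_r`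
gives `S ≤ k m + C` for `C = |x(s₀) − D(x_{s₀})|`; hence
`S² ≤ 2k²m² + 2C² ≤ 2k²(N² + S²) + 2C²`.
-/

open Set

section SegmentNorm

variable {d : ℕ} {r : ℝ}

lemma rnorm_nonneg (r : ℝ) (φ : ℝ → EuclideanSpace ℝ (Fin d)) : 0 ≤ rnorm r φ :=
  Real.sSup_nonneg (by rintro _ ⟨θ, -, rfl⟩; positivity)

lemma le_rnorm {φ : ℝ → EuclideanSpace ℝ (Fin d)}
    (hφ : BddAbove ((fun θ => Real.exp (r * θ) * ‖φ θ‖) '' Iic 0)) {θ : ℝ} (hθ : θ ≤ 0) :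
    Real.exp (r * θ) * ‖φ θ‖ ≤ rnorm r φ :=
  le_csSup hφ (mem_image_of_mem _ hθ)

lemma rnorm_le {φ : ℝ → EuclideanSpace ℝ (Fin d)} {M : ℝ} (hM : 0 ≤ M)
    (h : ∀ θ ≤ 0, Real.exp (r * θ) * ‖φ θ‖ ≤ M) : rnorm r φ ≤ M :=
  Real.sSup_le (by rintro _ ⟨θ, hθ, rfl⟩; exact h θ hθ) hM

lemma memCr_zero : memCr r (0 : ℝ → EuclideanSpace ℝ (Fin d)) :=
  ⟨continuousOn_const, ⟨0, by rintro _ ⟨θ, -, rfl⟩; simp⟩⟩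

lemma norm_le_mul_rnorm {k : ℝ}
    {D : (ℝ → EuclideanSpace ℝ (Fin d)) → EuclideanSpace ℝ (Fin d)}
    (hLip : ∀ φ ψ : ℝ → EuclideanSpace ℝ (Fin d), memCr r φ → memCr r ψ →
      ‖D φ - D ψ‖ ≤ k * rnorm r (φ - ψ))
    (hD0 : D 0 = 0) {φ : ℝ → EuclideanSpace ℝ (Fin d)} (hφ : memCr r φ) :
    ‖D φ‖ ≤ k * rnorm r φ := by
  simpa [hD0] using hLip φ 0 hφ memCr_zero

variable {x : ℝ → EuclideanSpace ℝ (Fin d)} {t s S : ℝ}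

lemma exp_mul_norm_seg_le_max (hr : 0 ≤ r)
    (hξ : BddAbove ((fun θ => Real.exp (r * θ) * ‖seg x 0 θ‖) '' Iic 0))
    (hS : ∀ u ∈ Icc 0 t, ‖x u‖ ≤ S) (hs : s ∈ Icc 0 t) {θ : ℝ} (hθ : θ ≤ 0) :
    Real.exp (r * θ) * ‖seg x s θ‖ ≤ max (rnorm r (seg x 0)) S := by
  rcases le_total (s + θ) 0 with hneg | hpos
  · calc Real.exp (r * θ) * ‖seg x s θ‖
        ≤ Real.exp (r * (s + θ)) * ‖seg x 0 (s + θ)‖ := by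
          simp only [seg, zero_add]
          exact mul_le_mul_of_nonneg_right (Real.exp_le_exp.2 (by nlinarith [hs.1])) (norm_nonneg _)
      _ ≤ rnorm r (seg x 0) := le_rnorm hξ hneg
      _ ≤ _ := le_max_left _ _
  · calc Real.exp (r * θ) * ‖seg x s θ‖ ≤ 1 * S := by
          gcongr
          · exact Real.exp_le_one_iff.2 (mul_nonpos_of_nonneg_of_nonpos hr hθ)
          · exact hS _ ⟨hpos, by linarith [hs.2]⟩
      _ ≤ _ := (one_mul S).trans_le (le_max_right _ _)

lemma rnorm_seg_le_max (hr : 0 ≤ r)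
    (hξ : BddAbove ((fun θ => Real.exp (r * θ) * ‖seg x 0 θ‖) '' Iic 0))
    (hS : ∀ u ∈ Icc 0 t, ‖x u‖ ≤ S) (hs : s ∈ Icc 0 t) :
    rnorm r (seg x s) ≤ max (rnorm r (seg x 0)) S :=
  rnorm_le ((rnorm_nonneg r _).trans (le_max_left _ _))
    fun _ hθ => exp_mul_norm_seg_le_max hr hξ hS hs hθ

lemma memCr_seg (hr : 0 ≤ r) (hx : ContinuousOn x (Iic t))
    (hξ : BddAbove ((fun θ => Real.exp (r * θ) * ‖seg x 0 θ‖) '' Iic 0))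
    (hS : ∀ u ∈ Icc 0 t, ‖x u‖ ≤ S) (hs : s ∈ Icc 0 t) : memCr r (seg x s) := by
  refine ⟨hx.comp (continuous_const_add s).continuousOn fun θ hθ => ?_, ?_⟩
  · simp only [mem_Iic] at hθ ⊢
    linarith [hs.2]
  · exact ⟨_, by rintro _ ⟨θ, hθ, rfl⟩; exact exp_mul_norm_seg_le_max hr hξ hS hs hθ⟩

end SegmentNorm

lemma one_sub_two_mul_sq_mul_sq_le {S N m k C : ℝ} (hS : 0 ≤ S) (hN : 0 ≤ N) (hm : 0 ≤ m)
    (hmax : m ≤ max N S) (h : S ≤ k * m + C) :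
    (1 - 2 * k ^ 2) * S ^ 2 ≤ 2 * k ^ 2 * N ^ 2 + 2 * C ^ 2 := by
  have hm2 : m ^ 2 ≤ N ^ 2 + S ^ 2 := by
    rcases le_total N S with hNS | hSN
    · nlinarith [max_eq_right hNS ▸ hmax]
    · nlinarith [max_eq_left hSN ▸ hmax]
  nlinarith [sq_nonneg (k * m - C), mul_le_mul_of_nonneg_left hm2 (sq_nonneg k)]

theorem neutral_L2_pathwise_bound_general {d : ℕ} (r k : ℝ) (hr : 0 < r)
    (D : (ℝ → EuclideanSpace ℝ (Fin d)) → EuclideanSpace ℝ (Fin d))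
    (hLip : ∀ φ ψ : ℝ → EuclideanSpace ℝ (Fin d), memCr r φ → memCr r ψ →
      ‖D φ - D ψ‖ ≤ k * rnorm r (φ - ψ))
    (hD0 : D 0 = 0)
    (t : ℝ) (ht : 0 ≤ t) (x : ℝ → EuclideanSpace ℝ (Fin d))
    (hx : ContinuousOn x (Set.Icc 0 t))
    (hξc : ContinuousOn x (Set.Iic 0))
    (hξb : BddAbove ((fun θ => Real.exp (r * θ) * ‖seg x 0 θ‖) '' Set.Iic 0)) :
    (1 - 2 * k ^ 2) * sSup ((fun s => ‖x s‖ ^ 2) '' Set.Icc 0 t)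
      ≤ 2 * k ^ 2 * (rnorm r (seg x 0)) ^ 2
        + 2 * sSup ((fun s => ‖x s - D (seg x s)‖ ^ 2) '' Set.Icc 0 t) := by
  obtain ⟨s₀, hs₀, hmax⟩ := isCompact_Icc.exists_isMaxOn (nonempty_Icc.2 ht) hx.norm
  have hS : ∀ u ∈ Icc 0 t, ‖x u‖ ≤ ‖x s₀‖ := fun u hu => hmax hu
  have hcont : ContinuousOn x (Iic t) :=
    Iic_union_Icc_eq_Iic ht ▸ hξc.union_of_isClosed hx isClosed_Iic isClosed_Icc
  have hmem s (hs : s ∈ Icc 0 t) := memCr_seg hr.le hcont hξb hS hs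
  have hrn s (hs : s ∈ Icc 0 t) := rnorm_seg_le_max hr.le hξb hS hs
  have hsup : sSup ((fun s => ‖x s‖ ^ 2) '' Icc 0 t) = ‖x s₀‖ ^ 2 :=
    IsGreatest.csSup_eq ⟨mem_image_of_mem _ hs₀, by
      rintro _ ⟨u, hu, rfl⟩
      exact pow_le_pow_left₀ (norm_nonneg _) (hS u hu) 2⟩
  have hbdd : BddAbove ((fun s => ‖x s - D (seg x s)‖ ^ 2) '' Icc 0 t) := by
    refine ⟨(‖x s₀‖ + |k| * max (rnorm r (seg x 0)) ‖x s₀‖) ^ 2, ?_⟩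
    rintro _ ⟨s, hs, rfl⟩
    have hD : ‖D (seg x s)‖ ≤ |k| * max (rnorm r (seg x 0)) ‖x s₀‖ :=
      (norm_le_mul_rnorm hLip hD0 (hmem s hs)).trans
        (mul_le_mul (le_abs_self k) (hrn s hs) (rnorm_nonneg r _) (abs_nonneg k))
    exact pow_le_pow_left₀ (norm_nonneg _)
      ((norm_sub_le _ _).trans (add_le_add (hS s hs) hD)) 2
  have hkey : ‖x s₀‖ ≤ k * rnorm r (seg x s₀) + ‖x s₀ - D (seg x s₀)‖ :=
    (norm_le_norm_add_norm_sub' _ (D (seg x s₀))).trans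
      (add_le_add_left (norm_le_mul_rnorm hLip hD0 (hmem s₀ hs₀)) _)
  rw [hsup]
  calc (1 - 2 * k ^ 2) * ‖x s₀‖ ^ 2
      ≤ 2 * k ^ 2 * rnorm r (seg x 0) ^ 2 + 2 * ‖x s₀ - D (seg x s₀)‖ ^ 2 :=
        one_sub_two_mul_sq_mul_sq_le (norm_nonneg _) (rnorm_nonneg r _) (rnorm_nonneg r _)
          (hrn s₀ hs₀) hkey
    _ ≤ _ := by gcongr; exact le_csSup hbdd (mem_image_of_mem _ hs₀)

/-- let `r > 0`, `k ∈ (0, 1/√2)`, and let `D` be `k`-Lipschitz on `C_r` with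
`D(0) = 0`. If `x` is continuous on `[0,t]` and its initial segment `ξ := x_0` lies in `C_r`,
then `(1 − 2k²) sup_{0≤s≤t}|x(s)|² ≤ 2k²‖ξ‖²_r + 2 sup_{0≤s≤t}|x(s) − D(x_s)|²`. -/
theorem neutral_L2_pathwise_bound {d : ℕ} (r k : ℝ) (hr : 0 < r)
    (hk0 : 0 < k) (hk : k < 1 / Real.sqrt 2)
    (D : (ℝ → EuclideanSpace ℝ (Fin d)) → EuclideanSpace ℝ (Fin d))
    (hLip : ∀ φ ψ : ℝ → EuclideanSpace ℝ (Fin d), memCr r φ → memCr r ψ →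
      ‖D φ - D ψ‖ ≤ k * rnorm r (φ - ψ))
    (hD0 : D 0 = 0)
    (t : ℝ) (ht : 0 ≤ t) (x : ℝ → EuclideanSpace ℝ (Fin d))
    (hx : ContinuousOn x (Set.Icc 0 t))
    (hξc : ContinuousOn x (Set.Iic 0))
    (hξb : BddAbove ((fun θ => Real.exp (r * θ) * ‖seg x 0 θ‖) '' Set.Iic 0)) :
    (1 - 2 * k ^ 2) * sSup ((fun s => ‖x s‖ ^ 2) '' Set.Icc 0 t)
      ≤ 2 * k ^ 2 * (rnorm r (seg x 0)) ^ 2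
        + 2 * sSup ((fun s => ‖x s - D (seg x s)‖ ^ 2) '' Set.Icc 0 t) :=
  neutral_L2_pathwise_bound_general r k hr D hLip hD0 t ht x hx hξc hξb
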